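/- arXiv:1602.02390 — 2 statements merged into one kernel-verified Lean document; each statement's English description precedes it below -/
import Mathlib

section
/- Let X and Y be independent random variables, each uniformly distributed on a 3-element alphabet, let Z = 1 if X = Y and Z = 0 otherwise, and set U = (X, Z), V = (Y, Z). Then for every finite-valued random variable Q on the same probability space with I(U ; V | Q) = 0, it holds that H(U | Q) + H(V | Q) ≤ (2/3) · log 2. -/
open MeasureTheory ProbabilityTheory Real
open scoped ENNReal

/-- The probability that the random variable `X` takes the value `x`. -/
noncomputable def pm {Ω S : Type*} [MeasurableSpace Ω] (μ : Measure Ω) (X : Ω → S) (x : S) : ℝ :=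
  (μ (X ⁻¹' {x})).toReal

/-- Shannon entropy (with natural logarithm) of a finite-valued random variable. -/
noncomputable def entH {Ω S : Type*} [MeasurableSpace Ω] [Fintype S]
    (μ : Measure Ω) (X : Ω → S) : ℝ :=
  ∑ x : S, Real.negMulLog (pm μ X x)

/-- Conditional entropy `H(X | Y)`. -/
noncomputable def condEnt {Ω S T : Type*} [MeasurableSpace Ω] [Fintype S] [Fintype T]
    (μ : Measure Ω) (X : Ω → S) (Y : Ω → T) : ℝ :=
  entH μ (fun ω => (X ω, Y ω)) - entH μ Y

/-- Mutual information `I(X ; Y)`. -/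
noncomputable def mutInf {Ω S T : Type*} [MeasurableSpace Ω] [Fintype S] [Fintype T]
    (μ : Measure Ω) (X : Ω → S) (Y : Ω → T) : ℝ :=
  entH μ X + entH μ Y - entH μ (fun ω => (X ω, Y ω))

/-- Conditional mutual information `I(X ; Y | Z)`. -/
noncomputable def condMutInf {Ω S T U : Type*} [MeasurableSpace Ω] [Fintype S] [Fintype T]
    [Fintype U] (μ : Measure Ω) (X : Ω → S) (Y : Ω → T) (Z : Ω → U) : ℝ :=
  entH μ (fun ω => (X ω, Z ω)) + entH μ (fun ω => (Y ω, Z ω))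
    - entH μ (fun ω => ((X ω, Y ω), Z ω)) - entH μ Z

/-! Given `Q = q`, conditional independence of `U` and `V` makes the support of `(U, V)` a
combinatorial rectangle. As `U` and `V` share the bit `Z`, such a rectangle of admissible values
is either a single point with `Z = 1`, or has `Z = 0` throughout; then its `X`- and
`Y`-projections are disjoint subsets of a 3-element set, so it has at most 2 points. Hence
`H(U | Q) + H(V | Q) = H(U, V | Q) ≤ P(Z = 0) log 2 = (2/3) log 2`. -/

open Finset InformationTheory

theorem sum_negMulLog_le {ι : Type*} (s : Finset ι) (r : ι → ℝ) (hr : ∀ i ∈ s, 0 ≤ r i) :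
    ∑ i ∈ s, negMulLog (r i) ≤ negMulLog (∑ i ∈ s, r i) + (∑ i ∈ s, r i) * log #s := by
  rcases s.eq_empty_or_nonempty with rfl | hs
  · simp
  have hk : (0 : ℝ) < #s := by exact_mod_cast hs.card_pos
  have hJ := concaveOn_negMulLog.le_map_sum (t := s) (w := fun _ => (#s : ℝ)⁻¹) (p := r)
    (fun _ _ => by positivity) (by simp [hk.ne']) (fun i hi => hr i hi)
  simp only [smul_eq_mul, ← mul_sum] at hJ
  rw [negMulLog_mul, negMulLog, inv_mul_le_iff₀ hk] at hJ
  simp only [log_inv] at hJ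
  exact hJ.trans_eq (by field_simp; ring)

theorem sum_negMulLog_sub_le {ι : Type*} [Fintype ι] (r : ι → ℝ) (hr : ∀ i, 0 ≤ r i) {k : ℕ}
    (hk : #{i | r i ≠ 0} ≤ k) :
    ∑ i, negMulLog (r i) - negMulLog (∑ i, r i) ≤ (∑ i, r i) * log k := by
  classical
  have hsupp := sum_negMulLog_le {i | r i ≠ 0} r (fun i _ => hr i)
  rw [sum_filter_of_ne (p := fun i => r i ≠ 0) (fun i _ h hri => h (by simp [hri])),
    sum_filter_ne_zero] at hsupp
  have hlog : log #{i | r i ≠ 0} ≤ log k := by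
    rcases Nat.eq_zero_or_pos #{i | r i ≠ 0} with h | h
    · simpa [h] using log_natCast_nonneg k
    · exact log_le_log (by exact_mod_cast h) (by exact_mod_cast hk)
  nlinarith [sum_nonneg fun i (_ : i ∈ univ) => hr i]

theorem mul_klFun_div {r s : ℝ} (h : r ≠ 0 → s ≠ 0) :
    s * klFun (r / s) = r * log r - r * log s + s - r := by
  rcases eq_or_ne r 0 with rfl | hr
  · rcases eq_or_ne s 0 with rfl | hs <;> simp [klFun_zero, *]
  · have hs := h hr
    rw [klFun_apply, log_div hr hs]
    field_simp

theorem sum_ne_zero_of_ne_zero {ι : Type*} [Fintype ι] {f : ι → ℝ} (hf : ∀ i, 0 ≤ f i) {i : ι}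
    (hi : f i ≠ 0) : ∑ j, f j ≠ 0 :=
  fun h => hi ((sum_eq_zero_iff_of_nonneg fun j _ => hf j).mp h i (mem_univ i))

section MutualInformation

variable {α β : Type*} [Fintype α] [Fintype β]

-- `p` need not be normalized: for `p = P((X, Y) = ·, Z = z)` this is `P(Z = z) · I(X ; Y | Z = z)`.
noncomputable def mutInfOfWeights (p : α × β → ℝ) : ℝ :=
  ∑ a, negMulLog (∑ b, p (a, b)) + ∑ b, negMulLog (∑ a, p (a, b))
    - ∑ w, negMulLog (p w) - negMulLog (∑ w, p w)

noncomputable def marginalProduct (p : α × β → ℝ) (w : α × β) : ℝ :=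
  (∑ b, p (w.1, b)) * (∑ a, p (a, w.2)) / ∑ w, p w

variable {p : α × β → ℝ}

theorem marginalProduct_ne_zero (hp : ∀ w, 0 ≤ p w) {a a' : α} {b b' : β}
    (h : p (a, b) ≠ 0) (h' : p (a', b') ≠ 0) : marginalProduct p (a, b') ≠ 0 := by
  have h₁ : ∑ b, p (a, b) ≠ 0 := sum_ne_zero_of_ne_zero (fun _ => hp _) h
  have h₂ : ∑ a, p (a, b') ≠ 0 := sum_ne_zero_of_ne_zero (fun _ => hp _) h'
  have h₃ : ∑ w, p w ≠ 0 := sum_ne_zero_of_ne_zero hp h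
  exact div_ne_zero (mul_ne_zero h₁ h₂) h₃

theorem marginalProduct_nonneg (hp : ∀ w, 0 ≤ p w) (w : α × β) : 0 ≤ marginalProduct p w :=
  div_nonneg (mul_nonneg (sum_nonneg fun _ _ => hp _) (sum_nonneg fun _ _ => hp _))
    (sum_nonneg fun _ _ => hp _)

theorem sum_marginalProduct : ∑ w, marginalProduct p w = ∑ w, p w := by
  simp only [marginalProduct, ← sum_div, Fintype.sum_prod_type, ← sum_mul_sum]
  rw [sum_comm (f := fun b a => p (a, b))]
  rcases eq_or_ne (∑ a, ∑ b, p (a, b)) 0 with h | h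
  · simp [h]
  · field_simp

theorem mul_log_marginalProduct (hp : ∀ w, 0 ≤ p w) (w : α × β) :
    p w * log (marginalProduct p w) = p w * log (∑ b, p (w.1, b)) + p w * log (∑ a, p (a, w.2))
      - p w * log (∑ w, p w) := by
  rcases eq_or_ne (p w) 0 with h | h
  · simp [h]
  · have h₁ : ∑ b, p (w.1, b) ≠ 0 := sum_ne_zero_of_ne_zero (fun _ => hp _) h
    have h₂ : ∑ a, p (a, w.2) ≠ 0 := sum_ne_zero_of_ne_zero (fun _ => hp _) h
    have h₃ : ∑ w, p w ≠ 0 := sum_ne_zero_of_ne_zero hp h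
    rw [marginalProduct, log_div (mul_ne_zero h₁ h₂) h₃, log_mul h₁ h₂]
    ring

theorem mutInfOfWeights_eq_sum_klFun (hp : ∀ w, 0 ≤ p w) :
    mutInfOfWeights p = ∑ w, marginalProduct p w * klFun (p w / marginalProduct p w) := by
  have hsplit : ∀ w, marginalProduct p w * klFun (p w / marginalProduct p w)
      = p w * log (p w) - (p w * log (∑ b, p (w.1, b)) + p w * log (∑ a, p (a, w.2))
        - p w * log (∑ w, p w)) + marginalProduct p w - p w := fun w => by
    rw [mul_klFun_div fun h => marginalProduct_ne_zero hp h h, mul_log_marginalProduct hp]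
  have hfst : ∑ w : α × β, p w * log (∑ b, p (w.1, b))
      = ∑ a, (∑ b, p (a, b)) * log (∑ b, p (a, b)) := by
    simp only [Fintype.sum_prod_type, ← sum_mul]
  have hsnd : ∑ w : α × β, p w * log (∑ a, p (a, w.2))
      = ∑ b, (∑ a, p (a, b)) * log (∑ a, p (a, b)) := by
    simp only [Fintype.sum_prod_type]
    rw [sum_comm]
    simp only [← sum_mul]
  simp only [hsplit, sum_add_distrib, sum_sub_distrib, hfst, hsnd, ← sum_mul,
    sum_marginalProduct, mutInfOfWeights, negMulLog, neg_mul, sum_neg_distrib]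
  ring

theorem mutInfOfWeights_nonneg (hp : ∀ w, 0 ≤ p w) : 0 ≤ mutInfOfWeights p := by
  rw [mutInfOfWeights_eq_sum_klFun hp]
  exact sum_nonneg fun w _ => mul_nonneg (marginalProduct_nonneg hp w)
    (klFun_nonneg (div_nonneg (hp w) (marginalProduct_nonneg hp w)))

theorem eq_marginalProduct_of_mutInfOfWeights_eq_zero (hp : ∀ w, 0 ≤ p w)
    (hI : mutInfOfWeights p = 0) (w : α × β) : p w = marginalProduct p w := by
  rw [mutInfOfWeights_eq_sum_klFun hp] at hI
  have hw := (sum_eq_zero_iff_of_nonneg fun w _ => mul_nonneg (marginalProduct_nonneg hp w)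
    (klFun_nonneg (div_nonneg (hp w) (marginalProduct_nonneg hp w)))).mp hI w (mem_univ w)
  rcases eq_or_ne (p w) 0 with h | h
  · rcases eq_or_ne (marginalProduct p w) 0 with h' | h'
    · rw [h, h']
    · simp [h, h', klFun_zero] at hw
  · have hs := marginalProduct_ne_zero hp h h
    rw [mul_eq_zero, or_iff_right hs, klFun_eq_zero_iff (div_nonneg (hp w)
      (marginalProduct_nonneg hp w)), div_eq_one_iff_eq hs] at hw
    exact hw

theorem apply_ne_zero_of_mutInfOfWeights_eq_zero (hp : ∀ w, 0 ≤ p w)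
    (hI : mutInfOfWeights p = 0) {a a' : α} {b b' : β} (h : p (a, b) ≠ 0) (h' : p (a', b') ≠ 0) :
    p (a, b') ≠ 0 := by
  rw [eq_marginalProduct_of_mutInfOfWeights_eq_zero hp hI]
  exact marginalProduct_ne_zero hp h h'

end MutualInformation

section Distribution

variable {Ω S T R : Type*} [MeasurableSpace Ω] {μ : Measure Ω}

theorem pm_nonneg (X : Ω → S) (x : S) : 0 ≤ pm μ X x := ENNReal.toReal_nonneg

theorem exists_eq_of_pm_ne_zero {X : Ω → S} {x : S} (h : pm μ X x ≠ 0) : ∃ ω, X ω = x := by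
  by_contra! hx
  exact h (by simp [pm, Set.preimage, hx])

theorem condEnt_add_condEnt_of_condMutInf_eq_zero [Fintype S] [Fintype T] [Fintype R]
    {X : Ω → S} {Y : Ω → T} {Z : Ω → R} (h : condMutInf μ X Y Z = 0) :
    condEnt μ X Z + condEnt μ Y Z = condEnt μ (fun ω => (X ω, Y ω)) Z := by
  unfold condMutInf at h
  unfold condEnt
  linarith

theorem pm_congr {X : Ω → S} {Y : Ω → T} {x : S} {y : T} (h : ∀ ω, X ω = x ↔ Y ω = y) :
    pm μ X x = pm μ Y y := by
  simp only [pm, Set.preimage, Set.mem_singleton_iff, h]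

variable [MeasurableSpace S] [MeasurableSingletonClass S] [MeasurableSpace T]
  [MeasurableSingletonClass T]

theorem ProbabilityTheory.IndepFun.pm_prod {X : Ω → S} {Y : Ω → T} (hXY : IndepFun X Y μ)
    (x : S) (y : T) :
    pm μ (fun ω => (X ω, Y ω)) (x, y) = pm μ X x * pm μ Y y := by
  have hset : (fun ω => (X ω, Y ω)) ⁻¹' {(x, y)} = X ⁻¹' {x} ∩ Y ⁻¹' {y} := by
    ext ω
    simp
  rw [pm, hset, hXY.measure_inter_preimage_eq_mul _ _ (measurableSet_singleton x)
    (measurableSet_singleton y), ENNReal.toReal_mul, pm, pm]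

variable [IsFiniteMeasure μ]

theorem sum_pm_eq_measureReal {X : Ω → S} (hX : Measurable X) (s : Finset S) :
    ∑ x ∈ s, pm μ X x = μ.real (X ⁻¹' s) :=
  sum_measureReal_preimage_singleton s fun x _ => hX (measurableSet_singleton x)

theorem pm_eq_sum_pm_prod [Fintype S] {X : Ω → S} {Y : Ω → T} (hX : Measurable X)
    (hY : Measurable Y) (y : T) : pm μ Y y = ∑ x, pm μ (fun ω => (X ω, Y ω)) (x, y) := by
  have h := sum_pm_eq_measureReal (μ := μ) (hX.prodMk hY) (univ ×ˢ {y})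
  rw [sum_product, sum_congr rfl fun x _ => sum_singleton _ _] at h
  rw [h]
  simp [pm, Set.preimage, measureReal_def, eq_comm]

variable [Fintype S] [Fintype T] [Fintype R] [MeasurableSpace R] [MeasurableSingletonClass R]

theorem condEnt_eq_sum {X : Ω → S} {Y : Ω → T} (hX : Measurable X) (hY : Measurable Y) :
    condEnt μ X Y = ∑ y, (∑ x, negMulLog (pm μ (fun ω => (X ω, Y ω)) (x, y))
      - negMulLog (∑ x, pm μ (fun ω => (X ω, Y ω)) (x, y))) := by
  simp only [condEnt, entH, Fintype.sum_prod_type, sum_sub_distrib, ← pm_eq_sum_pm_prod hX hY]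
  rw [sum_comm]

theorem condMutInf_eq_sum {X : Ω → S} {Y : Ω → T} {Z : Ω → R} (hX : Measurable X)
    (hY : Measurable Y) (hZ : Measurable Z) :
    condMutInf μ X Y Z =
      ∑ z, mutInfOfWeights fun w => pm μ (fun ω => ((X ω, Y ω), Z ω)) (w, z) := by
  have hXZ : ∀ x z, pm μ (fun ω => (X ω, Z ω)) (x, z)
      = ∑ y, pm μ (fun ω => ((X ω, Y ω), Z ω)) ((x, y), z) := fun x z => by
    rw [pm_eq_sum_pm_prod hY (hX.prodMk hZ)]
    exact sum_congr rfl fun y _ => pm_congr fun ω => by simp [and_assoc, and_left_comm]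
  have hYZ : ∀ y z, pm μ (fun ω => (Y ω, Z ω)) (y, z)
      = ∑ x, pm μ (fun ω => ((X ω, Y ω), Z ω)) ((x, y), z) := fun y z => by
    rw [pm_eq_sum_pm_prod hX (hY.prodMk hZ)]
    exact sum_congr rfl fun x _ => pm_congr fun ω => by simp [and_assoc]
  simp only [condMutInf, entH, mutInfOfWeights, hXZ, hYZ,
    ← pm_eq_sum_pm_prod (hX.prodMk hY) hZ, sum_add_distrib, sum_sub_distrib]
  simp only [Fintype.sum_prod_type_right]

end Distribution

section EqualityIndicator

variable {A : Type*}

-- the possible values of `((X, Z), (Y, Z))` when `Z = 1_{X = Y}`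
def IsEqPair (w : (A × Fin 2) × (A × Fin 2)) : Prop :=
  w.1.2 = w.2.2 ∧ (w.1.2 = 1 ↔ w.1.1 = w.2.1)

theorem isEqPair_of_eq_ite {Ω : Type*} [DecidableEq A] {X Y : Ω → A} {Z : Ω → Fin 2}
    (hZ : Z = fun ω => if X ω = Y ω then 1 else 0) (ω : Ω) :
    IsEqPair ((X ω, Z ω), (Y ω, Z ω)) := by
  simp only [IsEqPair, hZ]
  split_ifs <;> simp_all

variable {R : Finset ((A × Fin 2) × (A × Fin 2))}

theorem card_le_one_of_isEqPair (hrect : ∀ w ∈ R, ∀ w' ∈ R, (w.1, w'.2) ∈ R)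
    (hR : ∀ w ∈ R, IsEqPair w) {w : (A × Fin 2) × (A × Fin 2)} (hw : w ∈ R) (h1 : w.1.2 = 1) :
    #R ≤ 1 := by
  suffices ∀ w' ∈ R, w' = w from card_le_one.mpr fun a ha b hb => (this a ha).trans (this b hb).symm
  intro w' hw'
  have h := hR w hw
  have hl := hR _ (hrect w hw w' hw')
  have hr := hR _ (hrect w' hw' w hw)
  obtain ⟨⟨x, z⟩, ⟨y, t⟩⟩ := w
  obtain ⟨⟨x', z'⟩, ⟨y', t'⟩⟩ := w'
  simp only [IsEqPair] at h hl hr h1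
  grind

theorem four_mul_card_le_of_isEqPair [Fintype A] (hrect : ∀ w ∈ R, ∀ w' ∈ R, (w.1, w'.2) ∈ R)
    (hR : ∀ w ∈ R, IsEqPair w) (h0 : ∀ w ∈ R, w.1.2 = 0) : 4 * #R ≤ Fintype.card A ^ 2 := by
  classical
  set R₁ := R.image fun w => w.1.1
  set R₂ := R.image fun w => w.2.1
  have hinj : #R ≤ #R₁ * #R₂ := by
    rw [← card_product]
    refine card_le_card_of_injOn (fun w => (w.1.1, w.2.1)) (fun w hw => ?_) fun w hw w' hw' h => ?_
    · exact mem_coe.mpr (mem_product.mpr ⟨mem_image_of_mem _ hw, mem_image_of_mem _ hw⟩)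
    · have := (hR w hw).1
      have := (hR w' hw').1
      have := h0 w hw
      have := h0 w' hw'
      grind
  -- a common first coordinate `x` would put `((x, 0), (x, 0))` into `R`
  have hdisj : Disjoint R₁ R₂ := by
    refine disjoint_left.mpr fun x hx₁ hx₂ => ?_
    obtain ⟨w, hw, rfl⟩ := mem_image.mp hx₁
    obtain ⟨w', hw', hx⟩ := mem_image.mp hx₂
    have := (hR _ (hrect w hw w' hw')).2
    have := h0 w hw
    grind
  have hcard : #R₁ + #R₂ ≤ Fintype.card A := by
    rw [← card_union_of_disjoint hdisj]
    exact card_le_univ _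
  nlinarith [sq_nonneg ((#R₁ : ℤ) - #R₂)]

theorem sum_negMulLog_sub_le_of_isEqPair [Fintype A] (hA : Fintype.card A = 3)
    {p : (A × Fin 2) × (A × Fin 2) → ℝ} (hp : ∀ w, 0 ≤ p w) (hEq : ∀ w, p w ≠ 0 → IsEqPair w)
    (hI : mutInfOfWeights p = 0) :
    ∑ w, negMulLog (p w) - negMulLog (∑ w, p w) ≤ (∑ w with w.1.2 = 0, p w) * log 2 := by
  classical
  set R := univ.filter fun w => p w ≠ 0
  have hrect : ∀ w ∈ R, ∀ w' ∈ R, (w.1, w'.2) ∈ R := by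
    simp only [R, mem_filter, mem_univ, true_and]
    exact fun w hw w' hw' => apply_ne_zero_of_mutInfOfWeights_eq_zero hp hI hw hw'
  have hR : ∀ w ∈ R, IsEqPair w := fun w hw => hEq w (mem_filter.mp hw).2
  by_cases h1 : ∃ w ∈ R, w.1.2 = 1
  · obtain ⟨w, hw, hw1⟩ := h1
    calc _ ≤ (∑ w, p w) * log (1 : ℕ) :=
          sum_negMulLog_sub_le p hp (card_le_one_of_isEqPair hrect hR hw hw1)
      _ ≤ _ := by
        simpa using mul_nonneg (sum_nonneg fun w _ => hp w) (log_nonneg one_le_two)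
  · have h0 : ∀ w ∈ R, w.1.2 = 0 := fun w hw => by
      by_contra h
      exact h1 ⟨w, hw, by omega⟩
    have hcard : #R ≤ 2 := by
      have := four_mul_card_le_of_isEqPair hrect hR h0
      rw [hA] at this
      omega
    rw [sum_filter_of_ne fun w _ hw => h0 w (mem_filter.mpr ⟨mem_univ w, hw⟩)]
    simpa using sum_negMulLog_sub_le p hp hcard

end EqualityIndicator

theorem measureReal_ne_eq_two_thirds {Ω : Type*} [MeasurableSpace Ω] {μ : Measure Ω}
    [IsProbabilityMeasure μ] {A : Type*} [Fintype A] [MeasurableSpace A]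
    [MeasurableSingletonClass A] (hA : Fintype.card A = 3) {X Y : Ω → A} (hX : Measurable X)
    (hY : Measurable Y) (hindep : IndepFun X Y μ) (hXunif : ∀ a : A, μ (X ⁻¹' {a}) = (3 : ℝ≥0∞)⁻¹)
    (hYunif : ∀ a : A, μ (Y ⁻¹' {a}) = (3 : ℝ≥0∞)⁻¹) :
    μ.real {ω | X ω ≠ Y ω} = 2 / 3 := by
  classical
  have hset : {ω | X ω ≠ Y ω} = (fun ω => (X ω, Y ω)) ⁻¹' ↑(univ : Finset A).offDiag := by
    ext ω
    simp
  rw [hset, ← sum_pm_eq_measureReal (hX.prodMk hY)]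
  have hpair : ∀ a : A × A, pm μ (fun ω => (X ω, Y ω)) a = 1 / 9 := fun a => by
    rw [hindep.pm_prod, pm, pm, hXunif, hYunif]
    norm_num
  simp only [hpair, sum_const, offDiag_card, card_univ, hA]
  norm_num

/-- Ternary EQ: for independent uniform ternary `X, Y`, `Z = 1_{X=Y}`, `U = (X,Z)`,
`V = (Y,Z)`, any finite-valued `Q` with `I(U ; V | Q) = 0` satisfies
`H(U|Q) + H(V|Q) ≤ (2/3) log 2`. -/
theorem ternary_EQ_wyner_upper_bound
    {Ω : Type*} [MeasurableSpace Ω] (μ : Measure Ω) [IsProbabilityMeasure μ]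
    {A : Type*} [Fintype A] [DecidableEq A]
    [MeasurableSpace A] [MeasurableSingletonClass A] (hA : Fintype.card A = 3)
    (X Y : Ω → A) (hX : Measurable X) (hY : Measurable Y)
    (hindep : IndepFun X Y μ)
    (hXunif : ∀ a : A, μ (X ⁻¹' {a}) = (3 : ℝ≥0∞)⁻¹)
    (hYunif : ∀ a : A, μ (Y ⁻¹' {a}) = (3 : ℝ≥0∞)⁻¹)
    (Z : Ω → Fin 2) (hZ : Z = fun ω => if X ω = Y ω then 1 else 0)
    {T : Type*} [Fintype T] [MeasurableSpace T] [MeasurableSingletonClass T]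
    (Q : Ω → T) (hQ : Measurable Q)
    (hQci : condMutInf μ (fun ω => (X ω, Z ω)) (fun ω => (Y ω, Z ω)) Q = 0) :
    condEnt μ (fun ω => (X ω, Z ω)) Q + condEnt μ (fun ω => (Y ω, Z ω)) Q
      ≤ (2 / 3) * Real.log 2 := by
  have hZm : Measurable Z := hZ ▸
    (measurable_of_finite fun a : A × A => if a.1 = a.2 then (1 : Fin 2) else 0).comp (hX.prodMk hY)
  have hU : Measurable fun ω => (X ω, Z ω) := hX.prodMk hZm
  have hV : Measurable fun ω => (Y ω, Z ω) := hY.prodMk hZm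
  set P : T → (A × Fin 2) × (A × Fin 2) → ℝ :=
    fun q w => pm μ (fun ω => (((X ω, Z ω), (Y ω, Z ω)), Q ω)) (w, q)
  have hI : ∀ q, mutInfOfWeights (P q) = 0 := by
    rw [condMutInf_eq_sum hU hV hQ] at hQci
    exact fun q => (sum_eq_zero_iff_of_nonneg fun q _ =>
      mutInfOfWeights_nonneg fun w => pm_nonneg _ _).mp hQci q (mem_univ q)
  have hEq : ∀ q w, P q w ≠ 0 → IsEqPair w := fun q w h => by
    obtain ⟨ω, hω⟩ := exists_eq_of_pm_ne_zero h
    exact (Prod.mk.inj hω).1 ▸ isEqPair_of_eq_ite hZ ω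
  have hmass : ∑ q, ∑ w with w.1.2 = 0, P q w = 2 / 3 := by
    rw [← measureReal_ne_eq_two_thirds hA hX hY hindep hXunif hYunif, ← sum_product_right,
      sum_pm_eq_measureReal ((hU.prodMk hV).prodMk hQ)]
    congr 1
    ext ω
    simp [hZ]
  calc _ = condEnt μ (fun ω => ((X ω, Z ω), (Y ω, Z ω))) Q :=
        condEnt_add_condEnt_of_condMutInf_eq_zero hQci
    _ = ∑ q, (∑ w, negMulLog (P q w) - negMulLog (∑ w, P q w)) := condEnt_eq_sum (hU.prodMk hV) hQ
    _ ≤ ∑ q, (∑ w with w.1.2 = 0, P q w) * log 2 := sum_le_sum fun q _ =>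
        sum_negMulLog_sub_le_of_isEqPair hA (fun w => pm_nonneg _ _) (hEq q) (hI q)
    _ = 2 / 3 * log 2 := by rw [← sum_mul, hmass]
end

section
/- Let X and Y be independent random variables, each uniformly distributed on a 3-element alphabet, let Z = 1 if X = Y and Z = 0 otherwise, and let M = (X, Z). Then H(Z | (M, X)) = 0, H(Z | (M, Y)) = 0, I(X ; Y | M) = 0, and I(X ; M | Y) + I(Y ; M | X) = 2 log 3 − (2/3) log 2. (This is the information cost of the protocol in which Alice reveals X and Bob replies with Z, showing the lower bound 2 log 3 − (2/3) log 2 for ternary EQ is tight.) -/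
open MeasureTheory ProbabilityTheory Real
open scoped ENNReal

lemma pm_comp {Ω A S : Type*} [MeasurableSpace Ω] (μ : Measure Ω)
    [Fintype A] [DecidableEq A] [MeasurableSpace A] [MeasurableSingletonClass A]
    [DecidableEq S]
    {X Y : Ω → A} (hX : Measurable X) (hY : Measurable Y) (hindep : IndepFun X Y μ)
    (hXunif : ∀ a, μ (X ⁻¹' {a}) = (3:ℝ≥0∞)⁻¹) (hYunif : ∀ a, μ (Y ⁻¹' {a}) = (3:ℝ≥0∞)⁻¹)
    (f : A × A → S) (s : S) :
    pm μ (fun ω => f (X ω, Y ω)) s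
      = ((Finset.univ.filter (fun ab : A × A => f ab = s)).card : ℝ) / 9 := by
  have hset : (fun ω => f (X ω, Y ω)) ⁻¹' {s}
      = ⋃ ab ∈ (Finset.univ.filter (fun ab : A × A => f ab = s)),
          X ⁻¹' {ab.1} ∩ Y ⁻¹' {ab.2} := by
    ext ω
    simp only [Set.mem_preimage, Set.mem_singleton_iff, Set.mem_iUnion, Finset.mem_filter,
      Finset.mem_univ, true_and, Set.mem_inter_iff, exists_prop]
    constructor
    · intro h; exact ⟨(X ω, Y ω), h, rfl, rfl⟩
    · rintro ⟨⟨a, b⟩, hf, ha, hb⟩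
      subst ha; subst hb; exact hf
  have hdisj : ((Finset.univ.filter (fun ab : A × A => f ab = s)) : Set (A × A)).PairwiseDisjoint
      (fun ab : A × A => X ⁻¹' {ab.1} ∩ Y ⁻¹' {ab.2}) := by
    intro p _ q _ hpq
    rw [Function.onFun, Set.disjoint_left]
    rintro ω ⟨h1, h2⟩ ⟨h3, h4⟩
    apply hpq
    have e1 : p.1 = q.1 := by
      simp only [Set.mem_preimage, Set.mem_singleton_iff] at h1 h3; rw [← h1, ← h3]
    have e2 : p.2 = q.2 := by
      simp only [Set.mem_preimage, Set.mem_singleton_iff] at h2 h4; rw [← h2, ← h4]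
    exact Prod.ext e1 e2
  have hmeas : μ ((fun ω => f (X ω, Y ω)) ⁻¹' {s})
      = ∑ ab ∈ Finset.univ.filter (fun ab : A × A => f ab = s),
          μ (X ⁻¹' {ab.1} ∩ Y ⁻¹' {ab.2}) := by
    rw [hset]
    exact measure_biUnion_finset hdisj (fun ab _ =>
      (hX (measurableSet_singleton _)).inter (hY (measurableSet_singleton _)))
  have hval : ∀ ab : A × A, μ (X ⁻¹' {ab.1} ∩ Y ⁻¹' {ab.2}) = (9 : ℝ≥0∞)⁻¹ := by
    intro ab
    rw [hindep.measure_inter_preimage_eq_mul _ _ (measurableSet_singleton _)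
      (measurableSet_singleton _), hXunif, hYunif]
    rw [← ENNReal.mul_inv (by norm_num) (by norm_num)]
    norm_num
  rw [pm, hmeas, Finset.sum_congr rfl (fun ab _ => hval ab), Finset.sum_const, nsmul_eq_mul]
  rw [ENNReal.toReal_mul]
  simp [ENNReal.toReal_inv, div_eq_mul_inv]

lemma entH_comp_inj {Ω S T : Type*} [MeasurableSpace Ω] [Fintype S] [Fintype T]
    (μ : Measure Ω) (W : Ω → T) (V : Ω → S) (g : S → T) (hg : Function.Injective g)
    (h : ∀ ω, W ω = g (V ω)) : entH μ W = entH μ V := by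
  classical
  unfold entH
  rw [← Finset.sum_subset (Finset.subset_univ (Finset.univ.image g))]
  · rw [Finset.sum_image (fun a _ b _ hab => hg hab)]
    refine Finset.sum_congr rfl (fun s _ => ?_)
    have hpre : W ⁻¹' {g s} = V ⁻¹' {s} := by
      ext ω; simp [h ω, hg.eq_iff]
    rw [pm, pm, hpre]
  · intro t _ ht
    have hempty : W ⁻¹' {t} = ∅ := by
      ext ω
      simp only [Set.mem_preimage, Set.mem_singleton_iff, Set.mem_empty_iff_false, iff_false]
      intro hgt
      exact ht (Finset.mem_image.2 ⟨V ω, Finset.mem_univ _, by rw [← h ω, hgt]⟩)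
    unfold pm
    rw [hempty]
    simp

/-- Ternary EQ achievability: the protocol transcript `M = (X, Z)` satisfies
`H(Z | (M,X)) = 0`, `H(Z | (M,Y)) = 0`, `I(X ; Y | M) = 0` and has information cost
`I(X ; M | Y) + I(Y ; M | X) = 2 log 3 − (2/3) log 2`. -/
theorem ternary_EQ_protocol_information_cost
    {Ω : Type*} [MeasurableSpace Ω] (μ : Measure Ω) [IsProbabilityMeasure μ]
    {A : Type*} [Fintype A] [DecidableEq A]
    [MeasurableSpace A] [MeasurableSingletonClass A] (hA : Fintype.card A = 3)
    (X Y : Ω → A) (hX : Measurable X) (hY : Measurable Y)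
    (hindep : IndepFun X Y μ)
    (hXunif : ∀ a : A, μ (X ⁻¹' {a}) = (3 : ℝ≥0∞)⁻¹)
    (hYunif : ∀ a : A, μ (Y ⁻¹' {a}) = (3 : ℝ≥0∞)⁻¹)
    (Z : Ω → Fin 2) (hZ : Z = fun ω => if X ω = Y ω then 1 else 0)
    :
    condEnt μ Z (fun ω => ((X ω, Z ω), X ω)) = 0 ∧
    condEnt μ Z (fun ω => ((X ω, Z ω), Y ω)) = 0 ∧
    condMutInf μ X Y (fun ω => (X ω, Z ω)) = 0 ∧
    condMutInf μ X (fun ω => (X ω, Z ω)) Y + condMutInf μ Y (fun ω => (X ω, Z ω)) X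
      = 2 * Real.log 3 - (2 / 3) * Real.log 2 := by
  classical
  subst hZ
  -- basic log facts
  have l3 : Real.log (1/3 : ℝ) = -Real.log 3 := by rw [one_div, Real.log_inv]
  have l9 : Real.log (1/9 : ℝ) = -(2 * Real.log 3) := by
    rw [one_div, Real.log_inv, show (9:ℝ) = 3^2 by norm_num, Real.log_pow]; push_cast; ring
  have l29 : Real.log (2/9 : ℝ) = Real.log 2 - 2 * Real.log 3 := by
    rw [Real.log_div (by norm_num) (by norm_num), show (9:ℝ) = 3^2 by norm_num, Real.log_pow]
    push_cast; ring
  -- pm of (X,Y)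
  have p9 : ∀ s : A × A, pm μ (fun ω => (X ω, Y ω)) s = 1/9 := by
    intro s
    have h := pm_comp μ hX hY hindep hXunif hYunif (fun ab => ab) s
    rw [show (Finset.univ.filter (fun ab : A × A => ab = s)) = {s} by
      simp [Finset.filter_eq']] at h
    simpa using h
  have hXY : entH μ (fun ω => (X ω, Y ω)) = 2 * Real.log 3 := by
    rw [entH, Finset.sum_congr rfl (fun s _ => by rw [p9 s]), Finset.sum_const,
      Finset.card_univ, Fintype.card_prod, hA, nsmul_eq_mul]
    rw [Real.negMulLog, l9]; push_cast; ring
  -- pm of X, Y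
  have hX3 : entH μ X = Real.log 3 := by
    have px : ∀ a : A, pm μ X a = 1/3 := by
      intro a; rw [pm, hXunif]; simp [ENNReal.toReal_inv]
    rw [entH, Finset.sum_congr rfl (fun a _ => by rw [px a]), Finset.sum_const,
      Finset.card_univ, hA, nsmul_eq_mul]
    rw [Real.negMulLog, l3]; push_cast; ring
  have hY3 : entH μ Y = Real.log 3 := by
    have py : ∀ a : A, pm μ Y a = 1/3 := by
      intro a; rw [pm, hYunif]; simp [ENNReal.toReal_inv]
    rw [entH, Finset.sum_congr rfl (fun a _ => by rw [py a]), Finset.sum_const,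
      Finset.card_univ, hA, nsmul_eq_mul]
    rw [Real.negMulLog, l3]; push_cast; ring
  -- pm of (X, Z)
  have pc1 : ∀ x : A, pm μ (fun ω => (X ω, if X ω = Y ω then (1:Fin 2) else 0)) (x, 1) = 1/9 := by
    intro x
    have h := pm_comp μ hX hY hindep hXunif hYunif
      (fun ab => (ab.1, if ab.1 = ab.2 then (1:Fin 2) else 0)) (x, 1)
    rw [show (Finset.univ.filter
        (fun ab : A × A => (ab.1, if ab.1 = ab.2 then (1:Fin 2) else 0) = (x, 1))) = {(x,x)} by
      ext ⟨a, b⟩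
      simp only [Finset.mem_filter, Finset.mem_univ, true_and, Finset.mem_singleton,
        Prod.mk.injEq, Prod.ext_iff]
      constructor
      · rintro ⟨rfl, h2⟩
        split_ifs at h2 with hab
        · exact ⟨rfl, hab.symm⟩
        · exact absurd h2 (by decide)
      · rintro ⟨rfl, rfl⟩; simp] at h
    simpa using h
  have pc0 : ∀ x : A, pm μ (fun ω => (X ω, if X ω = Y ω then (1:Fin 2) else 0)) (x, 0) = 2/9 := by
    intro x
    have h := pm_comp μ hX hY hindep hXunif hYunif
      (fun ab => (ab.1, if ab.1 = ab.2 then (1:Fin 2) else 0)) (x, 0)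
    rw [show (Finset.univ.filter
        (fun ab : A × A => (ab.1, if ab.1 = ab.2 then (1:Fin 2) else 0) = (x, 0)))
        = ({x} : Finset A) ×ˢ (Finset.univ.erase x) by
      ext ⟨a, b⟩
      simp only [Finset.mem_filter, Finset.mem_univ, true_and, Finset.mem_product,
        Finset.mem_singleton, Finset.mem_erase, and_true, Prod.mk.injEq]
      constructor
      · rintro ⟨rfl, h2⟩
        refine ⟨rfl, fun hb => ?_⟩
        rw [hb, if_pos rfl] at h2
        exact absurd h2 (by decide)
      · rintro ⟨rfl, hb⟩
        exact ⟨rfl, by rw [if_neg (fun hh => hb hh.symm)]⟩] at h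
    rw [Finset.card_product, Finset.card_singleton, Finset.card_erase_of_mem (Finset.mem_univ x),
      Finset.card_univ, hA] at h
    simpa using h
  have hc : entH μ (fun ω => (X ω, if X ω = Y ω then (1:Fin 2) else 0))
      = 2 * Real.log 3 - (2/3) * Real.log 2 := by
    rw [entH, Fintype.sum_prod_type]
    rw [Finset.sum_congr rfl (fun x _ => by
      rw [Fin.sum_univ_two, pc0 x, pc1 x])]
    rw [Finset.sum_const, Finset.card_univ, hA, nsmul_eq_mul]
    rw [Real.negMulLog, Real.negMulLog, l9, l29]; push_cast; ring
  -- abbreviations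
  set Vc : Ω → A × Fin 2 := fun ω => (X ω, if X ω = Y ω then (1:Fin 2) else 0) with hVc
  set V2 : Ω → A × A := fun ω => (X ω, Y ω) with hV2
  -- entropy reductions via injections
  have E1 : entH μ (fun ω => ((X ω, if X ω = Y ω then (1:Fin 2) else 0), X ω)) = entH μ Vc :=
    entH_comp_inj μ _ Vc (fun p => (p, p.1)) (Function.LeftInverse.injective (g := fun r => r.1) (fun p => rfl)) (fun ω => rfl)
  have E2 : entH μ (fun ω => ((if X ω = Y ω then (1:Fin 2) else 0),
      ((X ω, if X ω = Y ω then (1:Fin 2) else 0), X ω))) = entH μ Vc :=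
    entH_comp_inj μ _ Vc (fun p => (p.2, (p, p.1)))
      (Function.LeftInverse.injective (g := fun r => r.2.1) (fun p => rfl)) (fun ω => rfl)
  have E3 : entH μ (fun ω => ((X ω, if X ω = Y ω then (1:Fin 2) else 0), Y ω)) = entH μ V2 :=
    entH_comp_inj μ _ V2 (fun ab => ((ab.1, if ab.1 = ab.2 then (1:Fin 2) else 0), ab.2))
      (Function.LeftInverse.injective (g := fun r => (r.1.1, r.2)) (fun p => rfl))
      (fun ω => rfl)
  have E4 : entH μ (fun ω => ((if X ω = Y ω then (1:Fin 2) else 0),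
      ((X ω, if X ω = Y ω then (1:Fin 2) else 0), Y ω))) = entH μ V2 :=
    entH_comp_inj μ _ V2
      (fun ab => ((if ab.1 = ab.2 then (1:Fin 2) else 0),
        ((ab.1, if ab.1 = ab.2 then (1:Fin 2) else 0), ab.2)))
      (Function.LeftInverse.injective (g := fun r => (r.2.1.1, r.2.2)) (fun p => rfl))
      (fun ω => rfl)
  have E5 : entH μ (fun ω => (X ω, (X ω, if X ω = Y ω then (1:Fin 2) else 0))) = entH μ Vc :=
    entH_comp_inj μ _ Vc (fun p => (p.1, p)) (Function.LeftInverse.injective (g := fun r => r.2) (fun p => rfl)) (fun ω => rfl)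
  have E6 : entH μ (fun ω => (Y ω, (X ω, if X ω = Y ω then (1:Fin 2) else 0))) = entH μ V2 :=
    entH_comp_inj μ _ V2 (fun ab => (ab.2, (ab.1, if ab.1 = ab.2 then (1:Fin 2) else 0)))
      (Function.LeftInverse.injective (g := fun r => (r.2.1, r.1)) (fun p => rfl)) (fun ω => rfl)
  have E7 : entH μ (fun ω => ((X ω, Y ω), (X ω, if X ω = Y ω then (1:Fin 2) else 0)))
      = entH μ V2 :=
    entH_comp_inj μ _ V2 (fun ab => (ab, (ab.1, if ab.1 = ab.2 then (1:Fin 2) else 0)))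
      (Function.LeftInverse.injective (g := fun r => r.1) (fun p => rfl)) (fun ω => rfl)
  have E8 : entH μ (fun ω => ((X ω, (X ω, if X ω = Y ω then (1:Fin 2) else 0)), Y ω))
      = entH μ V2 :=
    entH_comp_inj μ _ V2
      (fun ab => ((ab.1, (ab.1, if ab.1 = ab.2 then (1:Fin 2) else 0)), ab.2))
      (Function.LeftInverse.injective (g := fun r => (r.1.1, r.2)) (fun p => rfl)) (fun ω => rfl)
  have E9 : entH μ (fun ω => (Y ω, X ω)) = entH μ V2 :=
    entH_comp_inj μ _ V2 (fun ab => (ab.2, ab.1))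
      (Function.LeftInverse.injective (g := fun r => (r.2, r.1)) (fun p => rfl)) (fun ω => rfl)
  have E10 : entH μ (fun ω => ((Y ω, (X ω, if X ω = Y ω then (1:Fin 2) else 0)), X ω))
      = entH μ V2 :=
    entH_comp_inj μ _ V2
      (fun ab => ((ab.2, (ab.1, if ab.1 = ab.2 then (1:Fin 2) else 0)), ab.1))
      (Function.LeftInverse.injective (g := fun r => (r.2, r.1.1)) (fun p => rfl))
      (fun ω => rfl)
  have hcV : entH μ Vc = 2 * Real.log 3 - (2/3) * Real.log 2 := hc
  have hV : entH μ V2 = 2 * Real.log 3 := hXY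
  refine ⟨?_, ?_, ?_, ?_⟩
  · simp only [condEnt]
    rw [E2, E1]; ring
  · simp only [condEnt]
    rw [E4, E3]; ring
  · simp only [condMutInf]
    rw [E5, E6, E7]; rw [hcV, hV]; ring
  · simp only [condMutInf]
    rw [E3, E8, E9, E1, E10]
    rw [hcV, hV, hX3, hY3]; ring
end
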